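/- arXiv:1401.8138 — 5 statements merged into one kernel-verified Lean document; each statement's English description precedes it below -/
import Mathlib

section
/- Let n ≥ 5 and q ≥ 1, and let S ⊆ [n] with |S| = 2q satisfy Gale's evenness condition. Then S can be partitioned into q pairs S_1, …, S_q such that each pair S_r is either equal to {1, n} or consists of two consecutive integers of [n]. -/
open Finset

def Gale (a b : ℕ) (S : Finset ℕ) : Prop :=
  S ⊆ Finset.Icc a b ∧
  ∀ ℓ₁ ℓ₂ : ℕ, a ≤ ℓ₁ → ℓ₁ < ℓ₂ → ℓ₂ ≤ b → ℓ₁ ∉ S → ℓ₂ ∉ S →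
    Even ((Finset.Icc ℓ₁ ℓ₂ ∩ S).card)

lemma card_inter_split (I S P : Finset ℕ) (hP : P ⊆ S) :
    (I ∩ S).card = (I ∩ (S \ P)).card + (I ∩ P).card := by
  have h1 : I ∩ (S \ P) = (I ∩ S) \ (I ∩ P) := by
    ext x; simp only [mem_inter, mem_sdiff]; tauto
  have h2 : I ∩ P ⊆ I ∩ S := inter_subset_inter (Finset.Subset.refl I) hP
  rw [h1, card_sdiff_of_subset h2, Nat.sub_add_cancel (card_le_card h2)]

lemma card_split (n t : ℕ) (T : Finset ℕ) (hT : T ⊆ Finset.Icc 1 n) :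
    T.card = (Finset.Icc 1 t ∩ T).card + (Finset.Icc (t+1) n ∩ T).card := by
  have hu : (Finset.Icc 1 t ∩ T) ∪ (Finset.Icc (t+1) n ∩ T) = T := by
    ext x
    simp only [mem_union, mem_inter, mem_Icc]
    constructor
    · rintro (⟨_, hx⟩ | ⟨_, hx⟩) <;> exact hx
    · intro hx
      have hb := mem_Icc.mp (hT hx)
      by_cases h : x ≤ t
      · exact Or.inl ⟨⟨hb.1, h⟩, hx⟩
      · exact Or.inr ⟨⟨by omega, hb.2⟩, hx⟩
  have hd : Disjoint (Finset.Icc 1 t ∩ T) (Finset.Icc (t+1) n ∩ T) := by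
    rw [disjoint_left]
    intro x hx1 hx2
    have h1 := mem_Icc.mp (mem_inter.mp hx1).1
    have h2 := mem_Icc.mp (mem_inter.mp hx2).1
    omega
  rw [← card_union_of_disjoint hd, hu]

lemma gale_step (n q : ℕ) (S : Finset ℕ) (hcard : S.card = 2 * (q+1)) (hS : Gale 1 n S) :
    ∃ P : Finset ℕ, P ⊆ S ∧
      (P = {1, n} ∨ ∃ a, 1 ≤ a ∧ a + 1 ≤ n ∧ P = {a, a+1}) ∧
      (S \ P).card = 2 * q ∧ Gale 1 n (S \ P) := by
  obtain ⟨hsub, hg⟩ := hS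
  have hne : S.Nonempty := card_pos.mp (by omega)
  set m := S.min' hne with hm
  set M := S.max' hne with hM
  have hmS : m ∈ S := S.min'_mem hne
  have hMS : M ∈ S := S.max'_mem hne
  have hmin : ∀ x ∈ S, m ≤ x := fun x hx => S.min'_le x hx
  have hmax : ∀ x ∈ S, x ≤ M := fun x hx => S.le_max' x hx
  have hm1 : 1 ≤ m := (mem_Icc.mp (hsub hmS)).1
  have hMn : M ≤ n := (mem_Icc.mp (hsub hMS)).2
  have hmM : m < M := S.min'_lt_max'_of_card (by omega)
  by_cases hm2 : 2 ≤ m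
  · -- Case A : remove {m, m+1}
    have hm1n : m + 1 ≤ n := by have := hmax _ hmS; omega
    have hm1S : m + 1 ∈ S := by
      by_contra hns
      have hm1nS : m - 1 ∉ S := fun h => by have := hmin _ h; omega
      have hEv := hg (m-1) (m+1) (by omega) (by omega) hm1n hm1nS hns
      have heq : Finset.Icc (m-1) (m+1) ∩ S = {m} := by
        ext x
        simp only [mem_inter, mem_Icc, mem_singleton]
        constructor
        · rintro ⟨⟨h1, h2⟩, hxS⟩
          have hxm := hmin _ hxS
          have : x ≠ m + 1 := fun h => hns (h ▸ hxS)
          omega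
        · rintro rfl; exact ⟨⟨by omega, by omega⟩, hmS⟩
      rw [heq] at hEv
      simp [Nat.even_iff] at hEv
    refine ⟨{m, m+1}, ?_, Or.inr ⟨m, by omega, hm1n, rfl⟩, ?_, ?_, ?_⟩
    · exact insert_subset hmS (singleton_subset_iff.mpr hm1S)
    · have hP2 : ({m, m+1} : Finset ℕ).card = 2 := card_pair (by omega)
      rw [card_sdiff_of_subset (insert_subset hmS (singleton_subset_iff.mpr hm1S)), hP2, hcard]; omega
    · exact (sdiff_subset).trans hsub
    · intro ℓ₁ ℓ₂ h1 h12 h2n hn1 hn2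
      have hPS : ({m, m+1} : Finset ℕ) ⊆ S := insert_subset hmS (singleton_subset_iff.mpr hm1S)
      have hlb : ∀ x ∈ S \ {m, m+1}, m + 2 ≤ x := by
        intro x hx
        obtain ⟨hxS, hxP⟩ := mem_sdiff.mp hx
        simp only [mem_insert, mem_singleton] at hxP
        have := hmin _ hxS
        omega
      by_cases hc : ℓ₂ ≤ m + 1
      · have : Finset.Icc ℓ₁ ℓ₂ ∩ (S \ {m, m+1}) = ∅ := by
          rw [eq_empty_iff_forall_notMem]
          intro x hx
          obtain ⟨hxI, hxS⟩ := mem_inter.mp hx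
          have := mem_Icc.mp hxI
          have := hlb x hxS
          omega
        rw [this]; simp
      · have hl2P : ℓ₂ ∉ ({m, m+1} : Finset ℕ) := by
          simp only [mem_insert, mem_singleton]; omega
        have hl2S : ℓ₂ ∉ S := fun h => hn2 (mem_sdiff.mpr ⟨h, hl2P⟩)
        by_cases hc1 : ℓ₁ ∈ ({m, m+1} : Finset ℕ)
        · have hl1v : ℓ₁ = m ∨ ℓ₁ = m + 1 := by simpa using hc1
          have hIeq : Finset.Icc ℓ₁ ℓ₂ ∩ (S \ {m, m+1}) =
              Finset.Icc (m-1) ℓ₂ ∩ (S \ {m, m+1}) := by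
            ext x
            simp only [mem_inter, mem_Icc]
            constructor
            · rintro ⟨⟨ha, hb⟩, hx⟩
              exact ⟨⟨by have := hlb x hx; omega, hb⟩, hx⟩
            · rintro ⟨⟨ha, hb⟩, hx⟩
              have := hlb x hx
              exact ⟨⟨by omega, hb⟩, hx⟩
          rw [hIeq]
          have hsplit := card_inter_split (Finset.Icc (m-1) ℓ₂) S {m, m+1} hPS
          have hPcard : (Finset.Icc (m-1) ℓ₂ ∩ {m, m+1}).card = 2 := by
            have : Finset.Icc (m-1) ℓ₂ ∩ {m, m+1} = {m, m+1} := by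
              rw [inter_eq_right]
              intro x hx
              simp only [mem_insert, mem_singleton] at hx
              rw [mem_Icc]; omega
            rw [this, card_pair (by omega)]
          have hm1nS : m - 1 ∉ S := fun h => by have := hmin _ h; omega
          have hEv := hg (m-1) ℓ₂ (by omega) (by omega) h2n hm1nS hl2S
          rw [Nat.even_iff] at hEv ⊢
          omega
        · have hl1S : ℓ₁ ∉ S := fun h => hn1 (mem_sdiff.mpr ⟨h, hc1⟩)
          have hEv := hg ℓ₁ ℓ₂ h1 h12 h2n hl1S hl2S
          have hsplit := card_inter_split (Finset.Icc ℓ₁ ℓ₂) S {m, m+1} hPS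
          simp only [mem_insert, mem_singleton, not_or] at hc1
          have hP2 : (Finset.Icc ℓ₁ ℓ₂ ∩ {m, m+1}).card = 0 ∨
              (Finset.Icc ℓ₁ ℓ₂ ∩ {m, m+1}).card = 2 := by
            by_cases hmi : ℓ₁ ≤ m
            · right
              have : Finset.Icc ℓ₁ ℓ₂ ∩ {m, m+1} = {m, m+1} := by
                rw [inter_eq_right]
                intro x hx
                simp only [mem_insert, mem_singleton] at hx
                rw [mem_Icc]; omega
              rw [this, card_pair (by omega)]
            · left
              rw [card_eq_zero, eq_empty_iff_forall_notMem]
              intro x hx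
              obtain ⟨hxI, hxP⟩ := mem_inter.mp hx
              have := mem_Icc.mp hxI
              simp only [mem_insert, mem_singleton] at hxP
              omega
          rw [Nat.even_iff] at hEv ⊢
          rcases hP2 with h | h <;> omega
  · -- m = 1
    have hm1' : m = 1 := by omega
    by_cases hMlt : M + 1 ≤ n
    · -- Case B : remove {M-1, M}
      have hM2 : 2 ≤ M := by omega
      have hM1S : M - 1 ∈ S := by
        by_contra hns
        have hM1nS : M + 1 ∉ S := fun h => by have := hmax _ h; omega
        have hEv := hg (M-1) (M+1) (by omega) (by omega) hMlt hns hM1nS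
        have heq : Finset.Icc (M-1) (M+1) ∩ S = {M} := by
          ext x
          simp only [mem_inter, mem_Icc, mem_singleton]
          constructor
          · rintro ⟨⟨h1, h2⟩, hxS⟩
            have hxM := hmax _ hxS
            have : x ≠ M - 1 := fun h => hns (h ▸ hxS)
            omega
          · rintro rfl; exact ⟨⟨by omega, by omega⟩, hMS⟩
        rw [heq] at hEv
        simp [Nat.even_iff] at hEv
      have hPS : ({M-1, M} : Finset ℕ) ⊆ S := insert_subset hM1S (singleton_subset_iff.mpr hMS)
      refine ⟨{M-1, M}, hPS, Or.inr ⟨M-1, by omega, by omega, by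
        have : M - 1 + 1 = M := by omega
        rw [this]⟩, ?_, ?_, ?_⟩
      · rw [card_sdiff_of_subset hPS, card_pair (by omega), hcard]; omega
      · exact (sdiff_subset).trans hsub
      · intro ℓ₁ ℓ₂ h1 h12 h2n hn1 hn2
        have hub : ∀ x ∈ S \ {M-1, M}, x ≤ M - 2 := by
          intro x hx
          obtain ⟨hxS, hxP⟩ := mem_sdiff.mp hx
          simp only [mem_insert, mem_singleton] at hxP
          have := hmax _ hxS
          omega
        by_cases hc : M - 1 ≤ ℓ₁
        · have : Finset.Icc ℓ₁ ℓ₂ ∩ (S \ {M-1, M}) = ∅ := by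
            rw [eq_empty_iff_forall_notMem]
            intro x hx
            obtain ⟨hxI, hxS⟩ := mem_inter.mp hx
            have := mem_Icc.mp hxI
            have := hub x hxS
            omega
          rw [this]; simp
        · have hl1P : ℓ₁ ∉ ({M-1, M} : Finset ℕ) := by
            simp only [mem_insert, mem_singleton]; omega
          have hl1S : ℓ₁ ∉ S := fun h => hn1 (mem_sdiff.mpr ⟨h, hl1P⟩)
          by_cases hc2 : ℓ₂ ∈ ({M-1, M} : Finset ℕ)
          · have hl2v : ℓ₂ = M - 1 ∨ ℓ₂ = M := by simpa using hc2
            have hIeq : Finset.Icc ℓ₁ ℓ₂ ∩ (S \ {M-1, M}) =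
                Finset.Icc ℓ₁ (M+1) ∩ (S \ {M-1, M}) := by
              ext x
              simp only [mem_inter, mem_Icc]
              constructor
              · rintro ⟨⟨ha, hb⟩, hx⟩
                exact ⟨⟨ha, by have := hub x hx; omega⟩, hx⟩
              · rintro ⟨⟨ha, hb⟩, hx⟩
                have := hub x hx
                exact ⟨⟨ha, by omega⟩, hx⟩
            rw [hIeq]
            have hsplit := card_inter_split (Finset.Icc ℓ₁ (M+1)) S {M-1, M} hPS
            have hPcard : (Finset.Icc ℓ₁ (M+1) ∩ {M-1, M}).card = 2 := by
              have : Finset.Icc ℓ₁ (M+1) ∩ {M-1, M} = {M-1, M} := by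
                rw [inter_eq_right]
                intro x hx
                simp only [mem_insert, mem_singleton] at hx
                rw [mem_Icc]; omega
              rw [this, card_pair (by omega)]
            have hM1nS : M + 1 ∉ S := fun h => by have := hmax _ h; omega
            have hEv := hg ℓ₁ (M+1) h1 (by omega) hMlt hl1S hM1nS
            rw [Nat.even_iff] at hEv ⊢
            omega
          · have hl2S : ℓ₂ ∉ S := fun h => hn2 (mem_sdiff.mpr ⟨h, hc2⟩)
            have hEv := hg ℓ₁ ℓ₂ h1 h12 h2n hl1S hl2S
            have hsplit := card_inter_split (Finset.Icc ℓ₁ ℓ₂) S {M-1, M} hPS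
            simp only [mem_insert, mem_singleton, not_or] at hc2
            have hP2 : (Finset.Icc ℓ₁ ℓ₂ ∩ {M-1, M}).card = 0 ∨
                (Finset.Icc ℓ₁ ℓ₂ ∩ {M-1, M}).card = 2 := by
              by_cases hmi : M ≤ ℓ₂
              · right
                have : Finset.Icc ℓ₁ ℓ₂ ∩ {M-1, M} = {M-1, M} := by
                  rw [inter_eq_right]
                  intro x hx
                  simp only [mem_insert, mem_singleton] at hx
                  rw [mem_Icc]; omega
                rw [this, card_pair (by omega)]
              · left
                rw [card_eq_zero, eq_empty_iff_forall_notMem]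
                intro x hx
                obtain ⟨hxI, hxP⟩ := mem_inter.mp hx
                have := mem_Icc.mp hxI
                simp only [mem_insert, mem_singleton] at hxP
                omega
            rw [Nat.even_iff] at hEv ⊢
            rcases hP2 with h | h <;> omega
    · -- m = 1, M = n
      have hMn' : M = n := by omega
      have h1S : 1 ∈ S := hm1' ▸ hmS
      have hnS : n ∈ S := hMn' ▸ hMS
      have hn2 : 2 ≤ n := by omega
      by_cases hfull : Finset.Icc 1 n ⊆ S
      · -- Case D : S = Icc 1 n, remove {n-1, n}
        have hSeq : S = Finset.Icc 1 n := Finset.Subset.antisymm hsub hfull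
        have hncard : n = 2 * (q + 1) := by
          rw [hSeq] at hcard; rw [Nat.card_Icc] at hcard; omega
        have hPS : ({n-1, n} : Finset ℕ) ⊆ S := by
          rw [hSeq]
          intro x hx
          simp only [mem_insert, mem_singleton] at hx
          rw [mem_Icc]; omega
        refine ⟨{n-1, n}, hPS, Or.inr ⟨n-1, by omega, by omega, by
          have : n - 1 + 1 = n := by omega
          rw [this]⟩, ?_, ?_, ?_⟩
        · rw [card_sdiff_of_subset hPS, card_pair (by omega), hcard]; omega
        · exact (sdiff_subset).trans hsub
        · intro ℓ₁ ℓ₂ h1 h12 h2n hn1 hn2'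
          have hl1P : ℓ₁ ∈ ({n-1, n} : Finset ℕ) := by
            by_contra h
            exact hn1 (mem_sdiff.mpr ⟨hfull (mem_Icc.mpr ⟨h1, by omega⟩), h⟩)
          simp only [mem_insert, mem_singleton] at hl1P
          have : Finset.Icc ℓ₁ ℓ₂ ∩ (S \ {n-1, n}) = ∅ := by
            rw [eq_empty_iff_forall_notMem]
            intro x hx
            obtain ⟨hxI, hxS⟩ := mem_inter.mp hx
            obtain ⟨hxS', hxP⟩ := mem_sdiff.mp hxS
            have := mem_Icc.mp hxI
            have := mem_Icc.mp (hsub hxS')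
            simp only [mem_insert, mem_singleton] at hxP
            omega
          rw [this]; simp
      · -- Case C : j = largest non-member
        have hNMne : ((Finset.Icc 1 n).filter (· ∉ S)).Nonempty := by
          rw [not_subset] at hfull
          obtain ⟨x, hx1, hx2⟩ := hfull
          exact ⟨x, mem_filter.mpr ⟨hx1, hx2⟩⟩
        set j := ((Finset.Icc 1 n).filter (· ∉ S)).max' hNMne with hj
        have hjmem := ((Finset.Icc 1 n).filter (· ∉ S)).max'_mem hNMne
        rw [mem_filter, mem_Icc] at hjmem
        obtain ⟨⟨hj1, hjn⟩, hjS⟩ := hjmem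
        rw [← hj] at hj1 hjn hjS
        have hjmax : ∀ x, 1 ≤ x → x ≤ n → x ∉ S → x ≤ j := by
          intro x hx1 hx2 hx3
          exact le_max' _ x (mem_filter.mpr ⟨mem_Icc.mpr ⟨hx1, hx2⟩, hx3⟩)
        have hj2 : 2 ≤ j := by
          rcases Nat.lt_or_ge j 2 with h | h
          · exfalso; have : j = 1 := by omega
            exact hjS (by rw [this]; exact h1S)
          · exact h
        have hjn1 : j ≤ n - 1 := by
          have : j ≠ n := fun h => hjS (by rw [h]; exact hnS)
          omega
        have htail : ∀ x, j + 1 ≤ x → x ≤ n → x ∈ S := by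
          intro x hx1 hx2
          by_contra h
          have := hjmax x (by omega) hx2 h
          omega
        have hsuffix : ∀ t, 1 ≤ t → t ≤ n → t ∉ S →
            (Finset.Icc t n ∩ S).card = (Finset.Icc t j ∩ S).card + (n - j) := by
          intro t ht1 htn htS
          have htj : t ≤ j := hjmax t ht1 htn htS
          have heq : Finset.Icc t n ∩ S = (Finset.Icc t j ∩ S) ∪ Finset.Icc (j+1) n := by
            ext x
            simp only [mem_union, mem_inter, mem_Icc]
            constructor
            · rintro ⟨⟨ha, hb⟩, hx⟩
              by_cases h : x ≤ j
              · exact Or.inl ⟨⟨ha, h⟩, hx⟩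
              · exact Or.inr ⟨by omega, hb⟩
            · rintro (⟨⟨ha, hb⟩, hx⟩ | ⟨ha, hb⟩)
              · exact ⟨⟨ha, by omega⟩, hx⟩
              · exact ⟨⟨by omega, hb⟩, htail x ha hb⟩
          have hd : Disjoint (Finset.Icc t j ∩ S) (Finset.Icc (j+1) n) := by
            rw [disjoint_left]
            intro x hx1 hx2
            have := mem_Icc.mp (mem_inter.mp hx1).1
            have := mem_Icc.mp hx2
            omega
          rw [heq, card_union_of_disjoint hd, Nat.card_Icc]
          congr 1
          omega
        have hevenj : ∀ t, 1 ≤ t → t ≤ n → t ∉ S → Even ((Finset.Icc t j ∩ S).card) := by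
          intro t ht1 htn htS
          have htj : t ≤ j := hjmax t ht1 htn htS
          rcases Nat.lt_or_ge t j with h | h
          · exact hg t j ht1 h (by omega) htS hjS
          · have : t = j := by omega
            subst this
            rw [Finset.Icc_self, singleton_inter_of_notMem htS]
            simp
        have hsuffodd : ∀ t, 1 ≤ t → t ≤ n → t ∉ S →
            (Finset.Icc t n ∩ S).card % 2 = (n - j) % 2 := by
          intro t ht1 htn htS
          have h1 := hsuffix t ht1 htn htS
          have h2 := hevenj t ht1 htn htS
          rw [Nat.even_iff] at h2
          omega
        by_cases hpar : (n - j) % 2 = 0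
        · -- remove {n-1, n}
          have hjn2 : j ≤ n - 2 := by omega
          have hn1S : n - 1 ∈ S := htail (n-1) (by omega) (by omega)
          have hPS : ({n-1, n} : Finset ℕ) ⊆ S :=
            insert_subset hn1S (singleton_subset_iff.mpr hnS)
          refine ⟨{n-1, n}, hPS, Or.inr ⟨n-1, by omega, by omega, by
            have : n - 1 + 1 = n := by omega
            rw [this]⟩, ?_, ?_, ?_⟩
          · rw [card_sdiff_of_subset hPS, card_pair (by omega), hcard]; omega
          · exact (sdiff_subset).trans hsub
          · intro ℓ₁ ℓ₂ h1 h12 h2n hn1 hn2'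
            by_cases hc : n - 1 ≤ ℓ₁
            · have : Finset.Icc ℓ₁ ℓ₂ ∩ (S \ {n-1, n}) = ∅ := by
                rw [eq_empty_iff_forall_notMem]
                intro x hx
                obtain ⟨hxI, hxS⟩ := mem_inter.mp hx
                obtain ⟨hxS', hxP⟩ := mem_sdiff.mp hxS
                have := mem_Icc.mp hxI
                have := mem_Icc.mp (hsub hxS')
                simp only [mem_insert, mem_singleton] at hxP
                omega
              rw [this]; simp
            · have hl1P : ℓ₁ ∉ ({n-1, n} : Finset ℕ) := by
                simp only [mem_insert, mem_singleton]; omega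
              have hl1S : ℓ₁ ∉ S := fun h => hn1 (mem_sdiff.mpr ⟨h, hl1P⟩)
              by_cases hc2 : n - 1 ≤ ℓ₂
              · have hIeq : Finset.Icc ℓ₁ ℓ₂ ∩ (S \ {n-1, n}) =
                    Finset.Icc ℓ₁ n ∩ (S \ {n-1, n}) := by
                  ext x
                  simp only [mem_inter, mem_Icc]
                  constructor
                  · rintro ⟨⟨ha, hb⟩, hx⟩
                    obtain ⟨hxS', hxP⟩ := mem_sdiff.mp hx
                    exact ⟨⟨ha, (mem_Icc.mp (hsub hxS')).2⟩, hx⟩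
                  · rintro ⟨⟨ha, hb⟩, hx⟩
                    obtain ⟨hxS', hxP⟩ := mem_sdiff.mp hx
                    simp only [mem_insert, mem_singleton] at hxP
                    have := mem_Icc.mp (hsub hxS')
                    exact ⟨⟨ha, by omega⟩, hx⟩
                rw [hIeq]
                have hsplit := card_inter_split (Finset.Icc ℓ₁ n) S {n-1, n} hPS
                have hPcard : (Finset.Icc ℓ₁ n ∩ {n-1, n}).card = 2 := by
                  have : Finset.Icc ℓ₁ n ∩ {n-1, n} = {n-1, n} := by
                    rw [inter_eq_right]
                    intro x hx
                    simp only [mem_insert, mem_singleton] at hx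
                    rw [mem_Icc]; omega
                  rw [this, card_pair (by omega)]
                have hEv := hsuffodd ℓ₁ h1 (by omega) hl1S
                rw [Nat.even_iff]
                omega
              · have hl2P : ℓ₂ ∉ ({n-1, n} : Finset ℕ) := by
                  simp only [mem_insert, mem_singleton]; omega
                have hl2S : ℓ₂ ∉ S := fun h => hn2' (mem_sdiff.mpr ⟨h, hl2P⟩)
                have hEv := hg ℓ₁ ℓ₂ h1 h12 h2n hl1S hl2S
                have hsplit := card_inter_split (Finset.Icc ℓ₁ ℓ₂) S {n-1, n} hPS
                have hP0 : (Finset.Icc ℓ₁ ℓ₂ ∩ {n-1, n}).card = 0 := by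
                  rw [card_eq_zero, eq_empty_iff_forall_notMem]
                  intro x hx
                  obtain ⟨hxI, hxP⟩ := mem_inter.mp hx
                  have := mem_Icc.mp hxI
                  simp only [mem_insert, mem_singleton] at hxP
                  omega
                rw [Nat.even_iff] at hEv ⊢
                omega
        · -- remove {1, n}
          have hPS : ({1, n} : Finset ℕ) ⊆ S :=
            insert_subset h1S (singleton_subset_iff.mpr hnS)
          refine ⟨{1, n}, hPS, Or.inl rfl, ?_, ?_, ?_⟩
          · rw [card_sdiff_of_subset hPS, card_pair (by omega), hcard]; omega
          · exact (sdiff_subset).trans hsub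
          · intro ℓ₁ ℓ₂ h1 h12 h2n hn1 hn2'
            have hScard' : (S \ {1, n}).card = 2 * q := by
              rw [card_sdiff_of_subset hPS, card_pair (by omega), hcard]; omega
            by_cases hcl1 : ℓ₁ = 1
            · subst hcl1
              by_cases hcl2 : ℓ₂ = n
              · rw [hcl2]
                have : Finset.Icc 1 n ∩ (S \ {1, n}) = S \ {1, n} := by
                  rw [inter_eq_right]
                  exact (sdiff_subset).trans hsub
                rw [this, hScard']
                exact ⟨q, by omega⟩
              · have hl2P : ℓ₂ ∉ ({1, n} : Finset ℕ) := by
                  simp only [mem_insert, mem_singleton]; omega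
                have hl2S : ℓ₂ ∉ S := fun h => hn2' (mem_sdiff.mpr ⟨h, hl2P⟩)
                have hsplit := card_inter_split (Finset.Icc 1 ℓ₂) S {1, n} hPS
                have hPcard : (Finset.Icc 1 ℓ₂ ∩ {1, n}).card = 1 := by
                  have : Finset.Icc 1 ℓ₂ ∩ {1, n} = {1} := by
                    ext x
                    simp only [mem_inter, mem_Icc, mem_insert, mem_singleton]
                    omega
                  rw [this, card_singleton]
                have htot := card_split n ℓ₂ S hsub
                have hIeq : Finset.Icc (ℓ₂+1) n ∩ S = Finset.Icc ℓ₂ n ∩ S := by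
                  ext x
                  simp only [mem_inter, mem_Icc]
                  constructor
                  · rintro ⟨⟨ha, hb⟩, hx⟩
                    exact ⟨⟨by omega, hb⟩, hx⟩
                  · rintro ⟨⟨ha, hb⟩, hx⟩
                    have : x ≠ ℓ₂ := fun h => hl2S (h ▸ hx)
                    exact ⟨⟨by omega, hb⟩, hx⟩
                have hEv := hsuffodd ℓ₂ (by omega) (by omega) hl2S
                rw [hIeq] at htot
                rw [Nat.even_iff]
                omega
            · have hl1P : ℓ₁ ∉ ({1, n} : Finset ℕ) := by
                simp only [mem_insert, mem_singleton]; omega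
              have hl1S : ℓ₁ ∉ S := fun h => hn1 (mem_sdiff.mpr ⟨h, hl1P⟩)
              by_cases hcl2 : ℓ₂ = n
              · rw [hcl2]
                have hsplit := card_inter_split (Finset.Icc ℓ₁ n) S {1, n} hPS
                have hPcard : (Finset.Icc ℓ₁ n ∩ {1, n}).card = 1 := by
                  have : Finset.Icc ℓ₁ n ∩ {1, n} = {n} := by
                    ext x
                    simp only [mem_inter, mem_Icc, mem_insert, mem_singleton]
                    omega
                  rw [this, card_singleton]
                have hEv := hsuffodd ℓ₁ h1 (by omega) hl1S
                rw [Nat.even_iff]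
                omega
              · have hl2P : ℓ₂ ∉ ({1, n} : Finset ℕ) := by
                  simp only [mem_insert, mem_singleton]; omega
                have hl2S : ℓ₂ ∉ S := fun h => hn2' (mem_sdiff.mpr ⟨h, hl2P⟩)
                have hEv := hg ℓ₁ ℓ₂ h1 h12 h2n hl1S hl2S
                have hsplit := card_inter_split (Finset.Icc ℓ₁ ℓ₂) S {1, n} hPS
                have hP0 : (Finset.Icc ℓ₁ ℓ₂ ∩ {1, n}).card = 0 := by
                  rw [card_eq_zero, eq_empty_iff_forall_notMem]
                  intro x hx
                  obtain ⟨hxI, hxP⟩ := mem_inter.mp hx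
                  have := mem_Icc.mp hxI
                  simp only [mem_insert, mem_singleton] at hxP
                  omega
                rw [Nat.even_iff] at hEv ⊢
                omega

lemma gale_partition (n : ℕ) : ∀ q (S : Finset ℕ), S.card = 2 * q → Gale 1 n S →
    ∃ T : Fin q → Finset ℕ,
      (∀ r s : Fin q, r ≠ s → Disjoint (T r) (T s)) ∧
      (Finset.univ.biUnion T = S) ∧
      (∀ r : Fin q, T r = {1, n} ∨ ∃ a, 1 ≤ a ∧ a + 1 ≤ n ∧ T r = {a, a+1}) := by
  intro q
  induction q with
  | zero =>
    intro S hc _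
    refine ⟨fun i => i.elim0, fun r => r.elim0, ?_, fun r => r.elim0⟩
    have : S = ∅ := card_eq_zero.mp (by omega)
    simp [this]
  | succ q ih =>
    intro S hc hS
    obtain ⟨P, hPS, hshape, hcard', hS'⟩ := gale_step n q S hc hS
    obtain ⟨T', hdisj, hbi, hsh⟩ := ih (S \ P) hcard' hS'
    have hsub' : ∀ i, T' i ⊆ S \ P := fun i => hbi ▸ subset_biUnion_of_mem T' (mem_univ i)
    refine ⟨Fin.cons P T', ?_, ?_, ?_⟩
    · intro r s hrs
      rcases Fin.eq_zero_or_eq_succ r with rfl | ⟨i, rfl⟩ <;>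
        rcases Fin.eq_zero_or_eq_succ s with rfl | ⟨j, rfl⟩
      · exact absurd rfl hrs
      · rw [Fin.cons_zero, Fin.cons_succ]
        rw [disjoint_left]
        intro x hxP hxT
        exact (mem_sdiff.mp (hsub' j hxT)).2 hxP
      · rw [Fin.cons_zero, Fin.cons_succ]
        rw [disjoint_left]
        intro x hxT hxP
        exact (mem_sdiff.mp (hsub' i hxT)).2 hxP
      · rw [Fin.cons_succ, Fin.cons_succ]
        exact hdisj i j (fun h => hrs (by rw [h]))
    · ext x
      simp only [mem_biUnion, mem_univ, true_and]
      constructor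
      · rintro ⟨i, hi⟩
        rcases Fin.eq_zero_or_eq_succ i with rfl | ⟨j, rfl⟩
        · rw [Fin.cons_zero] at hi; exact hPS hi
        · rw [Fin.cons_succ] at hi
          exact (mem_sdiff.mp (hsub' j hi)).1
      · intro hx
        by_cases hxP : x ∈ P
        · exact ⟨0, by rw [Fin.cons_zero]; exact hxP⟩
        · have hx' : x ∈ S \ P := mem_sdiff.mpr ⟨hx, hxP⟩
          rw [← hbi] at hx'
          obtain ⟨j, _, hj⟩ := mem_biUnion.mp hx'
          exact ⟨j.succ, by rw [Fin.cons_succ]; exact hj⟩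
    · intro r
      rcases Fin.eq_zero_or_eq_succ r with rfl | ⟨j, rfl⟩
      · rw [Fin.cons_zero]; exact hshape
      · rw [Fin.cons_succ]; exact hsh j

theorem gale_even_set_partition_into_pairs (n q : ℕ) (hn : 5 ≤ n) (hq : 1 ≤ q)
    (S : Finset ℕ) (hcard : S.card = 2 * q) (hS : Gale 1 n S) :
    ∃ T : Fin q → Finset ℕ,
      (∀ r s : Fin q, r ≠ s → Disjoint (T r) (T s)) ∧
      (Finset.univ.biUnion T = S) ∧
      (∀ r : Fin q, T r = {1, n} ∨
        ∃ a : ℕ, 1 ≤ a ∧ a + 1 ≤ n ∧ T r = {a, a + 1}) := by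
  exact gale_partition n q S hcard hS
end

section
/- Let S ⊆ [n] with |S| = 2q+1 satisfy Gale's evenness condition, where n > 2q+1. Then either 1 ∈ S and S \ {1} satisfies Gale's evenness condition as a subset of {2, …, n}, or n ∈ S and S \ {n} satisfies Gale's evenness condition as a subset of {1, …, n−1}. -/
theorem gale_odd_split (n q : ℕ) (hn : 2 * q + 1 < n)
    (S : Finset ℕ) (hcard : S.card = 2 * q + 1) (hS : Gale 1 n S) :
    (1 ∈ S ∧ Gale 2 n (S.erase 1)) ∨ (n ∈ S ∧ Gale 1 (n - 1) (S.erase n)) := by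
  obtain ⟨hsub, hev⟩ := hS
  by_cases h1 : 1 ∈ S
  · left
    refine ⟨h1, ?_, ?_⟩
    · intro x hx
      have hx' := hsub (Finset.mem_of_mem_erase hx)
      have hne := Finset.ne_of_mem_erase hx
      simp only [Finset.mem_Icc] at hx' ⊢
      omega
    · intro ℓ₁ ℓ₂ ha hlt hb h₁ h₂
      have e : Finset.Icc ℓ₁ ℓ₂ ∩ S.erase 1 = Finset.Icc ℓ₁ ℓ₂ ∩ S := by
        ext x
        simp only [Finset.mem_inter, Finset.mem_Icc, Finset.mem_erase]
        constructor
        · rintro ⟨hx, _, hxS⟩; exact ⟨hx, hxS⟩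
        · rintro ⟨hx, hxS⟩; exact ⟨hx, by omega, hxS⟩
      rw [e]
      have h₁' : ℓ₁ ∉ S := by
        intro h
        exact h₁ (Finset.mem_erase.mpr ⟨by omega, h⟩)
      have h₂' : ℓ₂ ∉ S := by
        intro h
        exact h₂ (Finset.mem_erase.mpr ⟨by omega, h⟩)
      exact hev ℓ₁ ℓ₂ (by omega) hlt hb h₁' h₂'
  · right
    have hnS : n ∈ S := by
      by_contra hn'
      have := hev 1 n le_rfl (by omega) le_rfl h1 hn'
      have e : Finset.Icc 1 n ∩ S = S := Finset.inter_eq_right.mpr hsub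
      rw [e, hcard] at this
      obtain ⟨k, hk⟩ := this
      omega
    refine ⟨hnS, ?_, ?_⟩
    · intro x hx
      have hx' := hsub (Finset.mem_of_mem_erase hx)
      have hne := Finset.ne_of_mem_erase hx
      simp only [Finset.mem_Icc] at hx' ⊢
      omega
    · intro ℓ₁ ℓ₂ ha hlt hb h₁ h₂
      have hbn : ℓ₂ < n := by omega
      have e : Finset.Icc ℓ₁ ℓ₂ ∩ S.erase n = Finset.Icc ℓ₁ ℓ₂ ∩ S := by
        ext x
        simp only [Finset.mem_inter, Finset.mem_Icc, Finset.mem_erase]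
        constructor
        · rintro ⟨hx, _, hxS⟩; exact ⟨hx, hxS⟩
        · rintro ⟨hx, hxS⟩; exact ⟨hx, by omega, hxS⟩
      rw [e]
      have h₁' : ℓ₁ ∉ S := by
        intro h
        exact h₁ (Finset.mem_erase.mpr ⟨by omega, h⟩)
      have h₂' : ℓ₂ ∉ S := by
        intro h
        exact h₂ (Finset.mem_erase.mpr ⟨by omega, h⟩)
      exact hev ℓ₁ ℓ₂ ha hlt (by omega) h₁' h₂'
end

section
/- For every positive integer k, P^2_{[−k,k]} = { (x_1, x_2) ∈ ℝ^2 : ∃ z_1 with (z_1, x_2) ∈ P^2_{[0,k]} and −z_1 ≤ x_1 ≤ z_1 }. -/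
noncomputable def cyclic (d : ℕ) (t₁ t₂ : ℤ) : Set (Fin d → ℝ) :=
  convexHull ℝ { x | ∃ i : ℤ, t₁ ≤ i ∧ i ≤ t₂ ∧ x = fun u : Fin d => (i : ℝ) ^ ((u : ℕ) + 1) }

theorem cyclic_two_dim_ef_even (k : ℤ) (hk : 1 ≤ k) :
    cyclic 2 (-k) k =
      { x : Fin 2 → ℝ | ∃ z₁ : ℝ, ![z₁, x 1] ∈ cyclic 2 0 k ∧
        -z₁ ≤ x 0 ∧ x 0 ≤ z₁ } := by
  apply Set.Subset.antisymm
  · apply convexHull_min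
    · rintro x ⟨i, hi1, hi2, rfl⟩
      refine ⟨|(i : ℝ)|, ?_, by simp [neg_abs_le], by simp [le_abs_self]⟩
      apply subset_convexHull
      refine ⟨|i|, abs_nonneg i, abs_le.mpr ⟨hi1, hi2⟩, ?_⟩
      funext u; fin_cases u <;>
        simp [Int.cast_abs, sq_abs, pow_succ]
    · rintro x ⟨zx, hzx, hx1, hx2⟩ y ⟨zy, hzy, hy1, hy2⟩ a b ha hb hab
      refine ⟨a * zx + b * zy, ?_, ?_, ?_⟩
      · have h := (convex_convexHull ℝ _) hzx hzy ha hb hab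
        have he : ![a * zx + b * zy, (a • x + b • y) 1]
            = a • ![zx, x 1] + b • ![zy, y 1] := by
          funext u; fin_cases u <;> simp
        rw [he]; exact h
      · simp only [Pi.add_apply, Pi.smul_apply, smul_eq_mul]
        nlinarith
      · simp only [Pi.add_apply, Pi.smul_apply, smul_eq_mul]
        nlinarith
  · rintro x ⟨z, hz, h1, h2⟩
    let f : (Fin 2 → ℝ) →ₗ[ℝ] (Fin 2 → ℝ) :=
      { toFun := fun y => ![-(y 0), y 1]
        map_add' := by intro y w; funext u; fin_cases u <;> simp <;> ring
        map_smul' := by intro c y; funext u; fin_cases u <;> simp <;> ring }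
    have hneg : ![-z, x 1] ∈ cyclic 2 (-k) k := by
      have hsub : cyclic 2 0 k ⊆ f ⁻¹' (cyclic 2 (-k) k) := by
        apply convexHull_min
        · rintro y ⟨i, hi1, hi2, rfl⟩
          apply subset_convexHull
          refine ⟨-i, by omega, by omega, ?_⟩
          funext u; fin_cases u <;> simp [f] <;> ring
        · exact (convex_convexHull ℝ _).linear_preimage f
      have h := hsub hz
      simpa [f] using h
    have hpos : ![z, x 1] ∈ cyclic 2 (-k) k := by
      apply convexHull_mono _ hz
      rintro y ⟨i, hi1, hi2, rfl⟩; exact ⟨i, by omega, hi2, rfl⟩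
    have hseg : x 0 ∈ segment ℝ (-z) z := by
      rw [segment_eq_Icc (le_trans h1 h2)]; exact ⟨h1, h2⟩
    obtain ⟨a, b, ha, hb, hab, hx0⟩ := hseg
    have h := (convex_convexHull ℝ _) hneg hpos ha hb hab
    have he : x = a • ![-z, x 1] + b • ![z, x 1] := by
      funext u; fin_cases u
      · simpa using hx0.symm
      · simp
        linear_combination (-(x 1)) * hab
    rw [he]; exact h
end

section
/- For every integer k ≥ 1, P^2_{[−k+1,k]} = { (x_1, x_2) ∈ ℝ^2 : ∃ (z_1, z_2) ∈ P^2_{[1,k]} with z_2 − z_1 = x_2 − x_1 and 2 − 3z_1 + z_2 ≤ x_1 + x_2 ≤ z_1 + z_2 }. -/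
/-!
The affine map `ρ(z₀, z₁) = (1 - z₀, 1 - 2z₀ + z₁)` preserves the parabola, sending the point over
`t` to the point over `1 - t`; hence `P[-k+1, k]` is the convex hull of `P[1, k] ∪ ρ P[1, k]`.
For `z₀ > 1/2` the segment `[ρ z, z]` is exactly the set of `x` with `x₁ - x₀ = z₁ - z₀` and
`x₀ + x₁` between `2 - 3z₀ + z₁` and `z₀ + z₁`, so the right-hand side is the union of these
segments over `z ∈ P[1, k]`. It is contained in `P[-k+1, k]`, and it is convex (being cut out by
linear conditions on `(z, x)`) and contains every point of the parabola over `[-k+1, k]`.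
-/

open Set

def momentPoint (d : ℕ) (t : ℝ) : Fin d → ℝ := fun u => t ^ ((u : ℕ) + 1)

theorem momentPoint_mem_cyclic {d : ℕ} {t₁ t₂ i : ℤ} (h₁ : t₁ ≤ i) (h₂ : i ≤ t₂) :
    momentPoint d i ∈ cyclic d t₁ t₂ :=
  subset_convexHull ℝ _ ⟨i, h₁, h₂, rfl⟩

noncomputable def parabolaReflection (c : ℝ) : (Fin 2 → ℝ) →ᵃ[ℝ] (Fin 2 → ℝ) where
  toFun z := ![c - z 0, c ^ 2 - 2 * c * z 0 + z 1]
  linear :=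
    { toFun := fun z => ![-z 0, -2 * c * z 0 + z 1]
      map_add' := by intro p q; funext u; fin_cases u <;> simp <;> ring
      map_smul' := by intro a p; funext u; fin_cases u <;> simp; ring }
  map_vadd' := by intro p v; funext u; fin_cases u <;> simp <;> ring

@[simp]
theorem parabolaReflection_apply_zero (c : ℝ) (z : Fin 2 → ℝ) :
    parabolaReflection c z 0 = c - z 0 := rfl

@[simp]
theorem parabolaReflection_apply_one (c : ℝ) (z : Fin 2 → ℝ) :
    parabolaReflection c z 1 = c ^ 2 - 2 * c * z 0 + z 1 := rfl

theorem parabolaReflection_momentPoint (c t : ℝ) :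
    parabolaReflection c (momentPoint 2 t) = momentPoint 2 (c - t) := by
  funext u; fin_cases u <;> simp [momentPoint]; ring

theorem cyclic_mono {d : ℕ} {s₁ s₂ t₁ t₂ : ℤ} (h₁ : s₁ ≤ t₁) (h₂ : t₂ ≤ s₂) :
    cyclic d t₁ t₂ ⊆ cyclic d s₁ s₂ :=
  convexHull_mono fun _ ⟨i, hi₁, hi₂, hx⟩ => ⟨i, h₁.trans hi₁, hi₂.trans h₂, hx⟩

theorem mapsTo_parabolaReflection_cyclic (c t₁ t₂ : ℤ) :
    MapsTo (parabolaReflection c) (cyclic 2 t₁ t₂) (cyclic 2 (c - t₂) (c - t₁)) := by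
  rw [mapsTo_iff_image_subset, cyclic, AffineMap.image_convexHull]
  refine convexHull_mono ?_
  rintro _ ⟨_, ⟨i, hi₁, hi₂, rfl⟩, rfl⟩
  exact ⟨c - i, by omega, by omega, by push_cast; exact parabolaReflection_momentPoint _ _⟩

theorem le_apply_zero_of_mem_cyclic {d : ℕ} {t₁ t₂ : ℤ} {z : Fin (d + 1) → ℝ}
    (hz : z ∈ cyclic (d + 1) t₁ t₂) : (t₁ : ℝ) ≤ z 0 := by
  refine convexHull_min ?_ (convex_halfSpace_ge (LinearMap.proj 0).isLinear _) hz
  rintro _ ⟨i, hi₁, -, rfl⟩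
  simpa using hi₁

theorem mem_segment_parabolaReflection_one_iff {z x : Fin 2 → ℝ} (hz : 1 / 2 < z 0) :
    x ∈ segment ℝ (parabolaReflection 1 z) z ↔
      z 1 - z 0 = x 1 - x 0 ∧ 2 - 3 * z 0 + z 1 ≤ x 0 + x 1 ∧ x 0 + x 1 ≤ z 0 + z 1 := by
  constructor
  · rintro ⟨s, t, hs, ht, hst, rfl⟩
    obtain rfl : s = 1 - t := by linarith
    simp only [Pi.add_apply, Pi.smul_apply, smul_eq_mul, parabolaReflection_apply_zero,
      parabolaReflection_apply_one]
    refine ⟨by ring, by nlinarith, by nlinarith⟩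
  · rintro ⟨hdiff, hlow, hhigh⟩
    have hden : 0 < 4 * z 0 - 2 := by linarith
    set t := (x 0 + x 1 - (2 - 3 * z 0 + z 1)) / (4 * z 0 - 2) with ht
    have htden : t * (4 * z 0 - 2) = x 0 + x 1 - (2 - 3 * z 0 + z 1) :=
      div_mul_cancel₀ _ hden.ne'
    refine ⟨1 - t, t, ?_, div_nonneg (by linarith) hden.le, by ring, ?_⟩
    · rw [sub_nonneg, ht, div_le_one hden]; linarith
    · funext u
      fin_cases u
      · simp only [Fin.zero_eta, Fin.isValue, Pi.add_apply, Pi.smul_apply,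
          parabolaReflection_apply_zero, smul_eq_mul]
        linear_combination -(1 / 2 : ℝ) * hdiff + (1 / 2 : ℝ) * htden
      · simp only [Fin.mk_one, Fin.isValue, Pi.add_apply, Pi.smul_apply,
          parabolaReflection_apply_one, one_pow, mul_one, smul_eq_mul]
        linear_combination (1 / 2 : ℝ) * hdiff + (1 / 2 : ℝ) * htden

theorem convex_setOf_exists_fold {P : Set (Fin 2 → ℝ)} (hP : Convex ℝ P) :
    Convex ℝ {x : Fin 2 → ℝ | ∃ z ∈ P,
      z 1 - z 0 = x 1 - x 0 ∧ 2 - 3 * z 0 + z 1 ≤ x 0 + x 1 ∧ x 0 + x 1 ≤ z 0 + z 1} := by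
  rintro x ⟨z, hz, hdiff, hlow, hhigh⟩ y ⟨w, hw, hdiff', hlow', hhigh'⟩ a b ha hb hab
  refine ⟨a • z + b • w, hP hz hw ha hb hab, ?_⟩
  simp only [Pi.add_apply, Pi.smul_apply, smul_eq_mul]
  refine ⟨by linear_combination a * hdiff + b * hdiff', ?_, ?_⟩
  · nlinarith [mul_le_mul_of_nonneg_left hlow ha, mul_le_mul_of_nonneg_left hlow' hb]
  · nlinarith [mul_le_mul_of_nonneg_left hhigh ha, mul_le_mul_of_nonneg_left hhigh' hb]

theorem exists_mem_cyclic_momentPoint_mem_segment {k i : ℤ} (hi₁ : -k + 1 ≤ i) (hi₂ : i ≤ k) :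
    ∃ z ∈ cyclic 2 1 k, momentPoint 2 i ∈ segment ℝ (parabolaReflection 1 z) z := by
  rcases le_or_gt 1 i with hi | hi
  · exact ⟨_, momentPoint_mem_cyclic hi hi₂, right_mem_segment _ _ _⟩
  · refine ⟨_, momentPoint_mem_cyclic (i := 1 - i) (by omega) (by omega), ?_⟩
    have hreflect : parabolaReflection 1 (momentPoint 2 (1 - i : ℤ)) = momentPoint 2 i := by
      rw [parabolaReflection_momentPoint]; push_cast; ring_nf
    rw [hreflect]
    exact left_mem_segment _ _ _

theorem cyclic_two_dim_ef_odd (k : ℤ) (hk : 1 ≤ k) :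
    cyclic 2 (-k + 1) k =
      { x : Fin 2 → ℝ | ∃ z : Fin 2 → ℝ, z ∈ cyclic 2 1 k ∧
        z 1 - z 0 = x 1 - x 0 ∧
        2 - 3 * z 0 + z 1 ≤ x 0 + x 1 ∧ x 0 + x 1 ≤ z 0 + z 1 } := by
  have hz₀ : ∀ z ∈ cyclic 2 1 k, (1 / 2 : ℝ) < z 0 := fun z hz =>
    one_half_lt_one.trans_le (by exact_mod_cast le_apply_zero_of_mem_cyclic hz)
  refine (convexHull_min ?_ (convex_setOf_exists_fold (convex_convexHull ℝ _))).antisymm ?_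
  · rintro _ ⟨i, hi₁, hi₂, rfl⟩
    obtain ⟨z, hz, hseg⟩ := exists_mem_cyclic_momentPoint_mem_segment hi₁ hi₂
    exact ⟨z, hz, (mem_segment_parabolaReflection_one_iff (hz₀ z hz)).1 hseg⟩
  · rintro x ⟨z, hz, hfold⟩
    have hreflect : parabolaReflection 1 z ∈ cyclic 2 (1 - k) 0 := by
      simpa using mapsTo_parabolaReflection_cyclic 1 1 k hz
    exact (convex_convexHull ℝ _).segment_subset (cyclic_mono (by omega) (by omega) hreflect)
      (cyclic_mono (by omega) le_rfl hz)
      ((mem_segment_parabolaReflection_one_iff (hz₀ z hz)).2 hfold)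
end

section
/- For every integer k ≥ 2, the extension complexity of the 2-dimensional cyclic polytope satisfies xc(P^2_{2k}) ≤ xc(P^2_k) + 2 and xc(P^2_{2k−1}) ≤ xc(P^2_k) + 2. -/
/-- The extension complexity of `P ⊆ ℝ^d`: the least number `m` of inequalities in an
extended formulation, i.e. a system `A y ≤ b`, `C y = e` in some `ℝ^N` together with an
affine projection whose image is `P`. -/
noncomputable def xc {d : ℕ} (P : Set (Fin d → ℝ)) : ℕ :=
  sInf { m : ℕ | ∃ (N k : ℕ) (A : Matrix (Fin m) (Fin N) ℝ) (b : Fin m → ℝ)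
    (C : Matrix (Fin k) (Fin N) ℝ) (e : Fin k → ℝ)
    (π : (Fin N → ℝ) →ᵃ[ℝ] (Fin d → ℝ)),
    P = π '' { y | A.mulVec y ≤ b ∧ C.mulVec y = e } }

/-!
Let `β = (n + 1) / 2`. The affine map `ρ (x, y) = (n + 1 - x, y - (2x - n - 1)(n + 1))` is the
reflection in the line `x = β` along `(1, n + 1)`; it maps `(i, i²)` to `(n + 1 - i, (n + 1 - i)²)`.
For `n ∈ {2k - 1, 2k}` the points `(i, i²)`, `1 ≤ i ≤ k`, together with their images under `ρ`
are exactly the points `(i, i²)`, `1 ≤ i ≤ n`, so `P²_n = conv (P²_k ∪ ρ P²_k)`. As `P²_k` lies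
in the half-plane `x ≤ β`, this hull is `{p + t (1, n + 1) | p ∈ P²_k, 0 ≤ t ≤ 2 (β - p₁)}`: an
extended formulation of `P²_k` with one more variable `t` and two more inequalities is one
of `P²_n`.
-/

open Set Matrix

/-- `xc P` is the infimum of this set, hence `0` if the set is empty. -/
def extendedFormulationSizes {d : ℕ} (P : Set (Fin d → ℝ)) : Set ℕ :=
  { m : ℕ | ∃ (N k : ℕ) (A : Matrix (Fin m) (Fin N) ℝ) (b : Fin m → ℝ)
    (C : Matrix (Fin k) (Fin N) ℝ) (e : Fin k → ℝ)
    (π : (Fin N → ℝ) →ᵃ[ℝ] (Fin d → ℝ)),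
    P = π '' { y | A.mulVec y ≤ b ∧ C.mulVec y = e } }

theorem toMatrix'_pi_linear_mulVec {N m : ℕ} (f : Fin m → (Fin N → ℝ) →ᵃ[ℝ] ℝ) (y : Fin N → ℝ) :
    LinearMap.toMatrix' (LinearMap.pi fun i => (f i).linear) *ᵥ y = fun i => f i y - f i 0 := by
  funext i
  rw [LinearMap.toMatrix'_mulVec, LinearMap.pi_apply, congrFun (AffineMap.decomp (f i)) y]
  simp

section ObliqueReflection

variable {E : Type*} [AddCommGroup E] [Module ℝ E]

/-- When `φ v = 1`, the reflection in the hyperplane `φ = β` along `v`. -/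
def obliqueReflection (φ : E →ₗ[ℝ] ℝ) (β : ℝ) (v : E) : E →ᵃ[ℝ] E where
  toFun x := x + (2 * (β - φ x)) • v
  linear := LinearMap.id - (2 • φ).smulRight v
  map_vadd' p w := by
    simp only [vadd_eq_add, map_add, LinearMap.sub_apply, LinearMap.id_apply,
      LinearMap.smulRight_apply, LinearMap.smul_apply]
    module

theorem obliqueReflection_apply (φ : E →ₗ[ℝ] ℝ) (β : ℝ) (v x : E) :
    obliqueReflection φ β v x = x + (2 * (β - φ x)) • v := rfl

variable {φ : E →ₗ[ℝ] ℝ} {β : ℝ} {v : E}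

theorem convexHull_union_obliqueReflection_image {Q : Set E} (hQ : Convex ℝ Q)
    (hβ : ∀ y ∈ Q, φ y ≤ β) :
    convexHull ℝ (Q ∪ obliqueReflection φ β v '' Q) =
      {x | ∃ y ∈ Q, ∃ t, 0 ≤ t ∧ t ≤ 2 * (β - φ y) ∧ y + t • v = x} := by
  apply Subset.antisymm
  · refine convexHull_min ?_ ?_
    · rintro x (hx | ⟨y, hy, rfl⟩)
      · exact ⟨x, hx, 0, le_rfl, by linarith [hβ x hx], by simp⟩
      · exact ⟨y, hy, _, by linarith [hβ y hy], le_rfl, rfl⟩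
    · rintro _ ⟨y₁, hy₁, t₁, h₁, h₁', rfl⟩ _ ⟨y₂, hy₂, t₂, h₂, h₂', rfl⟩ a b ha hb hab
      refine ⟨a • y₁ + b • y₂, hQ hy₁ hy₂ ha hb hab, a * t₁ + b * t₂, by positivity, ?_, by module⟩
      rw [map_add, map_smul, map_smul, smul_eq_mul, smul_eq_mul]
      linarith [mul_le_mul_of_nonneg_left h₁' ha, mul_le_mul_of_nonneg_left h₂' hb,
        congrArg (· * β) hab]
  · rintro _ ⟨y, hy, t, ht₀, ht, rfl⟩
    have hy' : y ∈ convexHull ℝ (Q ∪ obliqueReflection φ β v '' Q) :=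
      subset_convexHull ℝ _ (Or.inl hy)
    rcases ht₀.eq_or_lt with rfl | ht₀
    · simpa using hy'
    have hs : 0 < 2 * (β - φ y) := ht₀.trans_le ht
    convert (convex_convexHull ℝ _).add_smul_mem hy'
      (subset_convexHull ℝ _ (Or.inr ⟨y, hy, rfl⟩)) ⟨by positivity, div_le_one_of_le₀ ht hs.le⟩
      using 2
    rw [smul_smul, div_mul_cancel₀ _ hs.ne']

end ObliqueReflection

namespace extendedFormulationSizes

variable {d : ℕ}

theorem card_mem_of_affine_fin {N m K : ℕ} (f : Fin m → (Fin N → ℝ) →ᵃ[ℝ] ℝ)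
    (g : Fin K → (Fin N → ℝ) →ᵃ[ℝ] ℝ) (π : (Fin N → ℝ) →ᵃ[ℝ] (Fin d → ℝ)) :
    m ∈ extendedFormulationSizes (π '' {y | (∀ i, f i y ≤ 0) ∧ ∀ j, g j y = 0}) := by
  refine ⟨N, K, LinearMap.toMatrix' (LinearMap.pi fun i => (f i).linear), fun i => - f i 0,
    LinearMap.toMatrix' (LinearMap.pi fun j => (g j).linear), fun j => - g j 0, π, ?_⟩
  simp only [toMatrix'_pi_linear_mulVec, Pi.le_def, funext_iff, sub_le_iff_le_add,
    sub_eq_iff_eq_add, neg_add_cancel]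

theorem card_mem_of_affine {W : Type*} [AddCommGroup W] [Module ℝ W] [FiniteDimensional ℝ W]
    {ι κ : Type*} [Fintype ι] [Fintype κ] (f : ι → W →ᵃ[ℝ] ℝ) (g : κ → W →ᵃ[ℝ] ℝ)
    (π : W →ᵃ[ℝ] (Fin d → ℝ)) :
    Fintype.card ι ∈ extendedFormulationSizes (π '' {w | (∀ i, f i w ≤ 0) ∧ ∀ j, g j w = 0}) := by
  let e : W ≃ᵃ[ℝ] (Fin (Module.finrank ℝ W) → ℝ) :=
    (Module.finBasis ℝ W).equivFun.toAffineEquiv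
  let eι := Fintype.equivFin ι
  let eκ := Fintype.equivFin κ
  convert card_mem_of_affine_fin (fun i => (f (eι.symm i)).comp e.symm.toAffineMap)
    (fun j => (g (eκ.symm j)).comp e.symm.toAffineMap) (π.comp e.symm.toAffineMap) using 1
  rw [AffineMap.coe_comp, image_comp]
  congr 2
  refine (image_preimage_eq _ e.symm.surjective).symm.trans (congrArg _ ?_)
  ext y
  exact and_congr eι.symm.forall_congr_right.symm eκ.symm.forall_congr_right.symm

theorem exists_affine_of_mem {P : Set (Fin d → ℝ)} {m : ℕ}
    (h : m ∈ extendedFormulationSizes P) :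
    ∃ (N K : ℕ) (f : Fin m → (Fin N → ℝ) →ᵃ[ℝ] ℝ) (g : Fin K → (Fin N → ℝ) →ᵃ[ℝ] ℝ)
      (π : (Fin N → ℝ) →ᵃ[ℝ] (Fin d → ℝ)),
      P = π '' {y | (∀ i, f i y ≤ 0) ∧ ∀ j, g j y = 0} := by
  obtain ⟨N, K, A, b, C, e, π, rfl⟩ := h
  refine ⟨N, K, fun i => (LinearMap.proj i ∘ₗ A.mulVecLin).toAffineMap - AffineMap.const ℝ _ (b i),
    fun j => (LinearMap.proj j ∘ₗ C.mulVecLin).toAffineMap - AffineMap.const ℝ _ (e j), π, ?_⟩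
  simp [Pi.le_def, funext_iff, sub_eq_zero]

theorem card_mem_convexHull_range {ι : Type*} [Fintype ι] (p : ι → Fin d → ℝ) :
    Fintype.card ι ∈ extendedFormulationSizes (convexHull ℝ (range p)) := by
  classical
  let L := Fintype.linearCombination ℝ p
  have hL : convexHull ℝ (range p) = L '' stdSimplex ℝ ι := by
    rw [← convexHull_basis_eq_stdSimplex, LinearMap.image_convexHull, ← range_comp]
    congr 2
    funext i
    simp [L, Fintype.linearCombination_apply]
  convert card_mem_of_affine (fun i => -(LinearMap.proj i).toAffineMap)
    (fun _ : Unit => (∑ i, LinearMap.proj i : (ι → ℝ) →ₗ[ℝ] ℝ).toAffineMap - AffineMap.const ℝ _ 1)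
    L.toAffineMap
  rw [hL]
  congr 1
  ext w
  simp [stdSimplex, sub_eq_zero]

theorem add_two_mem_convexHull_union_obliqueReflection_image {m : ℕ}
    {Q : Set (Fin d → ℝ)} (hm : m ∈ extendedFormulationSizes Q) (hQ : Convex ℝ Q)
    {φ : (Fin d → ℝ) →ₗ[ℝ] ℝ} {β : ℝ} {v : Fin d → ℝ} (hβ : ∀ y ∈ Q, φ y ≤ β) :
    m + 2 ∈ extendedFormulationSizes (convexHull ℝ (Q ∪ obliqueReflection φ β v '' Q)) := by
  obtain ⟨N, K, f, g, π, rfl⟩ := exists_affine_of_mem hm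
  rw [convexHull_union_obliqueReflection_image hQ hβ]
  let y : (Fin N → ℝ) × ℝ →ᵃ[ℝ] (Fin N → ℝ) := (LinearMap.fst ℝ _ ℝ).toAffineMap
  let t : (Fin N → ℝ) × ℝ →ᵃ[ℝ] ℝ := (LinearMap.snd ℝ _ ℝ).toAffineMap
  convert card_mem_of_affine
    (Sum.elim (fun i => (f i).comp y)
      ![-t, t - (2 : ℝ) • (AffineMap.const ℝ _ β - φ.toAffineMap.comp (π.comp y))])
    (fun j => (g j).comp y) (π.comp y + ((LinearMap.snd ℝ _ ℝ).smulRight v).toAffineMap) using 2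
  · ext x
    constructor
    · rintro ⟨_, ⟨a, ⟨hf, hg⟩, rfl⟩, s, hs₀, hs, rfl⟩
      refine ⟨(a, s), ⟨Sum.forall.2 ⟨hf, Fin.forall_fin_two.2 ⟨?_, ?_⟩⟩, hg⟩, rfl⟩ <;>
        simpa [y, t]
    · rintro ⟨⟨a, s⟩, ⟨hineq, hg⟩, rfl⟩
      have hs₀ : -s ≤ 0 := hineq (.inr 0)
      have hs : s - 2 * (β - φ (π a)) ≤ 0 := hineq (.inr 1)
      exact ⟨π a, ⟨a, ⟨fun i => hineq (.inl i), hg⟩, rfl⟩, s, by linarith, by linarith, rfl⟩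
  · simp

end extendedFormulationSizes

open extendedFormulationSizes

def momentCurve (d : ℕ) (i : ℤ) : Fin d → ℝ := fun u => (i : ℝ) ^ ((u : ℕ) + 1)

theorem cyclic_eq_convexHull_image (d : ℕ) (t₁ t₂ : ℤ) :
    cyclic d t₁ t₂ = convexHull ℝ (momentCurve d '' Icc t₁ t₂) := by
  unfold cyclic
  congr 1
  ext x
  simp only [mem_image, mem_Icc, and_assoc, eq_comm (b := x)]
  rfl

theorem extendedFormulationSizes_cyclic_nonempty (d : ℕ) (t₁ t₂ : ℤ) :
    (extendedFormulationSizes (cyclic d t₁ t₂)).Nonempty := by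
  rw [cyclic_eq_convexHull_image, image_eq_range]
  exact ⟨_, card_mem_convexHull_range _⟩

theorem obliqueReflection_momentCurve (n i : ℤ) :
    obliqueReflection (LinearMap.proj 0) (((n : ℝ) + 1) / 2) ![1, (n : ℝ) + 1] (momentCurve 2 i) =
      momentCurve 2 (n + 1 - i) := by
  funext u
  fin_cases u <;> simp [obliqueReflection_apply, momentCurve] <;> ring

theorem cyclic_two_eq_convexHull_union_obliqueReflection_image {k n : ℤ} (hn₁ : 2 * k - 1 ≤ n)
    (hn₂ : n ≤ 2 * k) :
    cyclic 2 1 n = convexHull ℝ (cyclic 2 1 k ∪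
      obliqueReflection (LinearMap.proj 0) (((n : ℝ) + 1) / 2) ![1, (n : ℝ) + 1] ''
        cyclic 2 1 k) := by
  have hfold : Icc 1 k ∪ (fun i => n + 1 - i) '' Icc 1 k = Icc 1 n := by
    rw [image_const_sub_Icc]
    ext i
    simp only [mem_union, mem_Icc]
    omega
  rw [cyclic_eq_convexHull_image, cyclic_eq_convexHull_image, AffineMap.image_convexHull,
    convexHull_convexHull_union_left, convexHull_convexHull_union_right, image_image]
  simp only [obliqueReflection_momentCurve]
  rw [← hfold, image_union, image_image]

theorem cyclic_two_subset_setOf_apply_zero_le {k : ℤ} {β : ℝ} (hk : k ≤ β) :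
    cyclic 2 1 k ⊆ {x | x 0 ≤ β} := by
  rw [cyclic_eq_convexHull_image]
  refine convexHull_min ?_
    (convex_halfSpace_le (LinearMap.proj (R := ℝ) (φ := fun _ : Fin 2 => ℝ) 0).isLinear β)
  rintro _ ⟨i, hi, rfl⟩
  simpa [momentCurve] using (Int.cast_le.2 hi.2).trans hk

theorem xc_cyclic_two_le {k n : ℤ} (hn₁ : 2 * k - 1 ≤ n) (hn₂ : n ≤ 2 * k) :
    xc (cyclic 2 1 n) ≤ xc (cyclic 2 1 k) + 2 := by
  have hk : (k : ℝ) ≤ ((n : ℝ) + 1) / 2 := by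
    rw [le_div_iff₀ two_pos]
    exact_mod_cast (by omega : k * 2 ≤ n + 1)
  rw [cyclic_two_eq_convexHull_union_obliqueReflection_image hn₁ hn₂]
  exact Nat.sInf_le <| add_two_mem_convexHull_union_obliqueReflection_image
    (Nat.sInf_mem (extendedFormulationSizes_cyclic_nonempty 2 1 k)) (convex_convexHull ℝ _)
    (cyclic_two_subset_setOf_apply_zero_le hk)

theorem xc_cyclic_two_dim_halving_general (k : ℕ) :
    xc (cyclic 2 1 (2 * (k : ℤ))) ≤ xc (cyclic 2 1 (k : ℤ)) + 2 ∧
    xc (cyclic 2 1 (2 * (k : ℤ) - 1)) ≤ xc (cyclic 2 1 (k : ℤ)) + 2 :=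
  ⟨xc_cyclic_two_le (by omega) le_rfl, xc_cyclic_two_le le_rfl (by omega)⟩

theorem xc_cyclic_two_dim_halving (k : ℕ) (hk : 2 ≤ k) :
    xc (cyclic 2 1 (2 * (k : ℤ))) ≤ xc (cyclic 2 1 (k : ℤ)) + 2 ∧
    xc (cyclic 2 1 (2 * (k : ℤ) - 1)) ≤ xc (cyclic 2 1 (k : ℤ)) + 2 :=
  xc_cyclic_two_dim_halving_general k
end
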